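/- arXiv:2208.08572 — 3 statements merged into one kernel-verified Lean document; each statement's English description precedes it below -/
import Mathlib

section
/- Let 𝕂 be an infinite field, I ⊆ 𝕂[X_0,...,X_r] an ideal, and U = (U_1,...,U_m) new indeterminates over 𝕂. Suppose F ∈ 𝕂(U)[X_0,...,X_r] is a zero divisor modulo the extended ideal I·𝕂(U)[X_0,...,X_r]. Then for a generic specialization U ↦ λ ∈ 𝕂^m, the specialized polynomial F(λ, X) is a zero divisor modulo I. -/
open MvPolynomial

/-- The rational function `f ∈ 𝕂(U)` specializes at `U ↦ lam` to the value `c ∈ 𝕂`: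
there is a representation `f = p/q` with `q(lam) ≠ 0` and `c = p(lam)/q(lam)`. -/
def SpecAt {K : Type*} [Field K] {m : ℕ} (lam : Fin m → K)
    (f : FractionRing (MvPolynomial (Fin m) K)) (c : K) : Prop :=
  ∃ p q : MvPolynomial (Fin m) K,
    MvPolynomial.eval lam q ≠ 0 ∧
    f * algebraMap (MvPolynomial (Fin m) K) (FractionRing (MvPolynomial (Fin m) K)) q =
      algebraMap (MvPolynomial (Fin m) K) (FractionRing (MvPolynomial (Fin m) K)) p ∧
    c * MvPolynomial.eval lam q = MvPolynomial.eval lam p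

/-- Coefficientwise specialization of a polynomial `F ∈ 𝕂(U)[X_0,…,X_r]` at `U ↦ lam`. -/
def SpecPolyAt {K : Type*} [Field K] {m r : ℕ} (lam : Fin m → K)
    (F : MvPolynomial (Fin (r + 1)) (FractionRing (MvPolynomial (Fin m) K)))
    (Fl : MvPolynomial (Fin (r + 1)) K) : Prop :=
  ∀ mo : Fin (r + 1) →₀ ℕ, SpecAt lam (MvPolynomial.coeff mo F) (MvPolynomial.coeff mo Fl)


noncomputable section Aux

variable {K : Type*} [CommSemiring K] {m r : ℕ}

/-- Swap the two groups of variables: `K[U][X] → K[X][U]`. -/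
def flipHom (K : Type*) [CommSemiring K] (m r : ℕ) :
    MvPolynomial (Fin (r + 1)) (MvPolynomial (Fin m) K) →+*
      MvPolynomial (Fin m) (MvPolynomial (Fin (r + 1)) K) :=
  eval₂Hom (MvPolynomial.map MvPolynomial.C) fun i => MvPolynomial.C (MvPolynomial.X i)

/-- Swap back: `K[X][U] → K[U][X]`. -/
def flopHom (K : Type*) [CommSemiring K] (m r : ℕ) :
    MvPolynomial (Fin m) (MvPolynomial (Fin (r + 1)) K) →+*
      MvPolynomial (Fin (r + 1)) (MvPolynomial (Fin m) K) :=
  eval₂Hom (MvPolynomial.map MvPolynomial.C) fun j => MvPolynomial.C (MvPolynomial.X j)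

@[simp] lemma flipHom_C (a : MvPolynomial (Fin m) K) :
    flipHom K m r (C a) = MvPolynomial.map MvPolynomial.C a := by
  simp [flipHom]

@[simp] lemma flipHom_X (i : Fin (r + 1)) :
    flipHom K m r (X i) = MvPolynomial.C (MvPolynomial.X i) := by
  simp [flipHom]

@[simp] lemma flopHom_C (a : MvPolynomial (Fin (r + 1)) K) :
    flopHom K m r (C a) = MvPolynomial.map MvPolynomial.C a := by
  simp [flopHom]

@[simp] lemma flopHom_X (j : Fin m) :
    flopHom K m r (X j) = MvPolynomial.C (MvPolynomial.X j) := by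
  simp [flopHom]

lemma flop_flip (p : MvPolynomial (Fin (r + 1)) (MvPolynomial (Fin m) K)) :
    flopHom K m r (flipHom K m r p) = p := by
  induction p using MvPolynomial.induction_on with
  | C a =>
    induction a using MvPolynomial.induction_on with
    | C k => simp [map_C]
    | add p q hp hq => rw [map_add, map_add, map_add]; rw [hp, hq]
    | mul_X p j hp => rw [map_mul, map_mul, map_mul, hp]; simp [map_X]
  | add p q hp hq => simp [hp, hq]
  | mul_X p i hp => simp [hp]

lemma map_eval_eq (lam : Fin m → K) :
    (MvPolynomial.map (MvPolynomial.eval lam) :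
        MvPolynomial (Fin (r + 1)) (MvPolynomial (Fin m) K) →+*
          MvPolynomial (Fin (r + 1)) K) =
      (eval₂Hom (RingHom.id (MvPolynomial (Fin (r + 1)) K))
          (fun i => MvPolynomial.C (lam i))).comp (flipHom K m r) := by
  apply MvPolynomial.ringHom_ext
  · intro a
    induction a using MvPolynomial.induction_on with
    | C k => simp [map_C]
    | add p q hp hq => simp only [map_add, RingHom.comp_apply] at *; rw [hp, hq]
    | mul_X p j hp =>
      simp only [map_mul, RingHom.comp_apply] at *
      rw [hp]; simp [map_X]
  · intro i
    simp

end Aux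

attribute [local instance] MvPolynomial.algebraMvPolynomial

set_option maxHeartbeats 2000000 in
set_option synthInstance.maxHeartbeats 400000 in

/-- Let `𝕂` be infinite, `I ⊆ 𝕂[X_0,…,X_r]` an ideal, and
`F ∈ 𝕂(U)[X_0,…,X_r]` a zero divisor modulo the extended ideal `I·𝕂(U)[X_0,…,X_r]`.
Then for a generic specialization `U ↦ lam ∈ 𝕂^m`, any specialized polynomial `F(lam, X)`
is a zero divisor modulo `I`. -/
theorem stmt4 {K : Type*} [Field K] [Infinite K] (m r : ℕ)
    (I : Ideal (MvPolynomial (Fin (r + 1)) K))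
    (F : MvPolynomial (Fin (r + 1)) (FractionRing (MvPolynomial (Fin m) K)))
    (hF : ∃ G : MvPolynomial (Fin (r + 1)) (FractionRing (MvPolynomial (Fin m) K)),
      G ∉ I.map (MvPolynomial.map
        ((algebraMap (MvPolynomial (Fin m) K)
          (FractionRing (MvPolynomial (Fin m) K))).comp (MvPolynomial.C : K →+* _))) ∧
      F * G ∈ I.map (MvPolynomial.map
        ((algebraMap (MvPolynomial (Fin m) K)
          (FractionRing (MvPolynomial (Fin m) K))).comp (MvPolynomial.C : K →+* _)))) :
    ∃ G0 : MvPolynomial (Fin m) K, G0 ≠ 0 ∧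
      ∀ lam : Fin m → K, MvPolynomial.eval lam G0 ≠ 0 →
        ∀ Fl : MvPolynomial (Fin (r + 1)) K, SpecPolyAt lam F Fl →
          ∃ H : MvPolynomial (Fin (r + 1)) K, H ∉ I ∧ Fl * H ∈ I := by
  classical
  obtain ⟨G, hGnot, hFG⟩ := hF
  set α : MvPolynomial (Fin m) K →+* FractionRing (MvPolynomial (Fin m) K) :=
    algebraMap (MvPolynomial (Fin m) K) (FractionRing (MvPolynomial (Fin m) K)) with hαdef
  have hα : Function.Injective α :=
    IsFractionRing.injective (MvPolynomial (Fin m) K) (FractionRing (MvPolynomial (Fin m) K))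
  have hmapinj : Function.Injective (MvPolynomial.map α (σ := Fin (r + 1))) := MvPolynomial.map_injective α hα
  set mapC : MvPolynomial (Fin (r + 1)) K →+* MvPolynomial (Fin (r + 1)) (MvPolynomial (Fin m) K) :=
    MvPolynomial.map (MvPolynomial.C : K →+* MvPolynomial (Fin m) K) with hmapC
  set M : Submonoid (MvPolynomial (Fin (r + 1)) (MvPolynomial (Fin m) K)) :=
    (nonZeroDivisors (MvPolynomial (Fin m) K)).map
      (MvPolynomial.C : MvPolynomial (Fin m) K →+* MvPolynomial (Fin (r + 1)) (MvPolynomial (Fin m) K)) with hM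
  have halgBA : (algebraMap (MvPolynomial (Fin (r + 1)) (MvPolynomial (Fin m) K))
      (MvPolynomial (Fin (r + 1)) (FractionRing (MvPolynomial (Fin m) K))))
      = (MvPolynomial.map α) := rfl
  -- rewrite the extended ideal as a two-step map
  have hJ : I.map (MvPolynomial.map (α.comp (MvPolynomial.C : K →+* MvPolynomial (Fin m) K)))
      = (I.map mapC).map (algebraMap (MvPolynomial (Fin (r + 1)) (MvPolynomial (Fin m) K))
        (MvPolynomial (Fin (r + 1)) (FractionRing (MvPolynomial (Fin m) K)))) := by
    rw [Ideal.map_map, halgBA]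
    congr 1
    refine RingHom.ext fun p => ?_
    simp only [RingHom.comp_apply, hmapC, MvPolynomial.map_map]
  rw [hJ] at hGnot hFG
  -- clear denominators of F and G
  obtain ⟨⟨Ft, sF⟩, hsF⟩ := IsLocalization.surj M F
  obtain ⟨dF, hdF, hdFC⟩ := sF.2
  obtain ⟨⟨Gt, sG⟩, hsG⟩ := IsLocalization.surj M G
  obtain ⟨dG, hdG, hdGC⟩ := sG.2
  have hFt : MvPolynomial.map α Ft = F * MvPolynomial.C (α dF) := by
    have hsF' : F * (MvPolynomial.map α) (sF : MvPolynomial (Fin (r + 1)) (MvPolynomial (Fin m) K))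
        = (MvPolynomial.map α) Ft := hsF
    rw [← hsF', ← hdFC, MvPolynomial.map_C]
  have hGt : MvPolynomial.map α Gt = G * MvPolynomial.C (α dG) := by
    have hsG' : G * (MvPolynomial.map α) (sG : MvPolynomial (Fin (r + 1)) (MvPolynomial (Fin m) K))
        = (MvPolynomial.map α) Gt := hsG
    rw [← hsG', ← hdGC, MvPolynomial.map_C]
  -- clear denominators of the ideal membership of F * G
  obtain ⟨⟨W', sW⟩, hsW⟩ := (IsLocalization.mem_map_algebraMap_iff M _).mp hFG
  obtain ⟨e, he, heC⟩ := sW.2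
  obtain ⟨W, hW⟩ := W'
  have hWα : MvPolynomial.map α W = (F * G) * MvPolynomial.C (α e) := by
    have hsW' : (F * G) * (MvPolynomial.map α) (sW : MvPolynomial (Fin (r + 1)) (MvPolynomial (Fin m) K))
        = (MvPolynomial.map α) W := hsW
    rw [← hsW', ← heC, MvPolynomial.map_C]
  -- key identity
  have key : MvPolynomial.C e * (Ft * Gt) = MvPolynomial.C (dF * dG) * W := by
    apply hmapinj
    rw [map_mul, map_mul, map_mul, hFt, hGt, hWα, MvPolynomial.map_C, MvPolynomial.map_C, map_mul]
    simp only [map_mul]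
    ring
  -- find a coefficient of the flipped Gt outside I
  set Gh := flipHom K m r Gt with hGh
  have hbeta : ∃ β, MvPolynomial.coeff β Gh ∉ I := by
    by_contra hall
    push_neg at hall
    have hGtI : Gt ∈ I.map mapC := by
      have h1 : Gt = flopHom K m r Gh := (flop_flip Gt).symm
      rw [h1, Gh.as_sum, map_sum]
      refine Ideal.sum_mem _ fun β hβ => ?_
      rw [MvPolynomial.monomial_eq, map_mul, flopHom_C]
      exact Ideal.mul_mem_right _ _ (Ideal.mem_map_of_mem _ (hall β))
    have hGJ : G ∈ (I.map mapC).map (algebraMap (MvPolynomial (Fin (r + 1)) (MvPolynomial (Fin m) K))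
        (MvPolynomial (Fin (r + 1)) (FractionRing (MvPolynomial (Fin m) K)))) := by
      have h2 := Ideal.mem_map_of_mem (algebraMap (MvPolynomial (Fin (r + 1)) (MvPolynomial (Fin m) K))
        (MvPolynomial (Fin (r + 1)) (FractionRing (MvPolynomial (Fin m) K)))) hGtI
      rw [halgBA, hGt] at h2
      have hu : IsUnit (MvPolynomial.C (α dG) :
          MvPolynomial (Fin (r + 1)) (FractionRing (MvPolynomial (Fin m) K))) :=
        (isUnit_iff_ne_zero.mpr (fun h0 => nonZeroDivisors.ne_zero hdG (hα (by simp [h0])))).map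
          (MvPolynomial.C : FractionRing (MvPolynomial (Fin m) K) →+* _)
      rwa [mul_comm, Ideal.unit_mul_mem_iff_mem _ hu] at h2
    exact hGnot hGJ
  obtain ⟨β0, hβ0⟩ := hbeta
  set qa := Ideal.Quotient.mkₐ K I with hqa
  have hv : qa (MvPolynomial.coeff β0 Gh) ≠ 0 := by
    simpa [hqa, Ideal.Quotient.mkₐ_eq_mk, Ideal.Quotient.eq_zero_iff_mem] using hβ0
  obtain ⟨f, hf⟩ : ∃ f : Module.Dual K (MvPolynomial (Fin (r + 1)) K ⧸ I),
      f (qa (MvPolynomial.coeff β0 Gh)) ≠ 0 := by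
    by_contra h
    push_neg at h
    exact hv ((Module.forall_dual_apply_eq_zero_iff K _).mp h)
  set h0 : MvPolynomial (Fin m) K :=
    ∑ β ∈ Gh.support, MvPolynomial.monomial β (f (qa (MvPolynomial.coeff β Gh))) with hh0def
  have hβ0supp : β0 ∈ Gh.support := by
    rw [MvPolynomial.mem_support_iff]
    intro h
    exact hβ0 (h ▸ I.zero_mem)
  have hco : MvPolynomial.coeff β0 h0 = f (qa (MvPolynomial.coeff β0 Gh)) := by
    rw [hh0def, MvPolynomial.coeff_sum]
    rw [Finset.sum_eq_single β0]
    · simp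
    · intro b _ hb; simp [MvPolynomial.coeff_monomial, hb]
    · intro h; exact absurd hβ0supp h
  have hh0 : h0 ≠ 0 := fun h => hf (by rw [← hco, h, MvPolynomial.coeff_zero])
  refine ⟨dF * (dG * (e * h0)), ?_, ?_⟩
  · exact mul_ne_zero (nonZeroDivisors.ne_zero hdF) (mul_ne_zero (nonZeroDivisors.ne_zero hdG)
      (mul_ne_zero (nonZeroDivisors.ne_zero he) hh0))
  intro lam hlam Fl hFl
  rw [map_mul, map_mul, map_mul] at hlam
  have hdF0 : MvPolynomial.eval lam dF ≠ 0 := fun h => hlam (by rw [h, zero_mul])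
  have hdG0 : MvPolynomial.eval lam dG ≠ 0 := fun h => hlam (by rw [h]; ring)
  have he0 : MvPolynomial.eval lam e ≠ 0 := fun h => hlam (by rw [h]; ring)
  have hh00 : MvPolynomial.eval lam h0 ≠ 0 := fun h => hlam (by rw [h]; ring)
  set ev : MvPolynomial (Fin (r + 1)) (MvPolynomial (Fin m) K) →+* MvPolynomial (Fin (r + 1)) K :=
    MvPolynomial.map (MvPolynomial.eval lam : MvPolynomial (Fin m) K →+* K) with hev
  have hev_comp : (I.map mapC).map ev = I := by
    rw [Ideal.map_map]
    have h1 : ev.comp mapC = RingHom.id (MvPolynomial (Fin (r + 1)) K) := by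
      refine RingHom.ext fun p => ?_
      rw [RingHom.comp_apply, hmapC, hev, MvPolynomial.map_map]
      have h2 : (MvPolynomial.eval lam : MvPolynomial (Fin m) K →+* K).comp
          (MvPolynomial.C : K →+* MvPolynomial (Fin m) K) = RingHom.id K :=
        RingHom.ext fun k => MvPolynomial.eval_C (f := lam) k
      rw [h2, MvPolynomial.map_id]
      rfl
    rw [h1, Ideal.map_id]
  have hWl : ev W ∈ I := by
    rw [← hev_comp]; exact Ideal.mem_map_of_mem _ hW
  have keyl : MvPolynomial.C (MvPolynomial.eval lam e) * (ev Ft * ev Gt)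
      = MvPolynomial.C (MvPolynomial.eval lam (dF * dG)) * ev W := by
    have h1 := congrArg ev key
    simpa [hev, map_mul, MvPolynomial.map_C] using h1
  have hFtGt : ev Ft * ev Gt ∈ I := by
    have hmem2 : MvPolynomial.C (MvPolynomial.eval lam e) * (ev Ft * ev Gt) ∈ I := by
      rw [keyl]; exact Ideal.mul_mem_left _ _ hWl
    exact (Ideal.unit_mul_mem_iff_mem I
      ((isUnit_iff_ne_zero.mpr he0).map (MvPolynomial.C : K →+* _))).mp hmem2
  -- relate ev Ft with Fl
  have hFt_ev : ev Ft = MvPolynomial.C (MvPolynomial.eval lam dF) * Fl := by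
    apply MvPolynomial.ext
    intro mo
    obtain ⟨p, q, hq, hpq, hc⟩ := hFl mo
    have h1 : α (MvPolynomial.coeff mo Ft) = α dF * MvPolynomial.coeff mo F := by
      have h2 := congrArg (MvPolynomial.coeff mo) hFt
      rw [mul_comm F] at h2
      simpa [MvPolynomial.coeff_map, MvPolynomial.coeff_C_mul] using h2
    have h2 : MvPolynomial.coeff mo Ft * q = dF * p := by
      apply hα
      rw [map_mul, map_mul, h1]
      calc α dF * MvPolynomial.coeff mo F * α q
          = α dF * (MvPolynomial.coeff mo F * α q) := by ring
        _ = α dF * α p := by rw [hpq]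
    have h3 : MvPolynomial.eval lam (MvPolynomial.coeff mo Ft) * MvPolynomial.eval lam q
        = (MvPolynomial.eval lam dF * MvPolynomial.coeff mo Fl) * MvPolynomial.eval lam q := by
      have h4 := congrArg (MvPolynomial.eval lam) h2
      rw [map_mul, map_mul] at h4
      rw [h4, ← hc]; ring
    have h5 := mul_right_cancel₀ hq h3
    simp [hev, MvPolynomial.coeff_map, MvPolynomial.coeff_C_mul, h5]
  have hFlGt : Fl * ev Gt ∈ I := by
    have h1 : ev Ft * ev Gt = MvPolynomial.C (MvPolynomial.eval lam dF) * (Fl * ev Gt) := by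
      rw [hFt_ev]; ring
    rw [h1] at hFtGt
    exact (Ideal.unit_mul_mem_iff_mem I
      ((isUnit_iff_ne_zero.mpr hdF0).map (MvPolynomial.C : K →+* _))).mp hFtGt
  -- ev Gt is not in I
  have hcalc : f (qa (ev Gt)) = MvPolynomial.eval lam h0 := by
    have hEv : ev Gt = MvPolynomial.eval₂ (RingHom.id (MvPolynomial (Fin (r + 1)) K))
        (fun i => MvPolynomial.C (lam i)) Gh := by
      have h1 := RingHom.congr_fun (map_eval_eq (K := K) (m := m) (r := r) lam) Gt
      rw [hev, h1, RingHom.comp_apply, MvPolynomial.coe_eval₂Hom, ← hGh]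
    rw [hEv, MvPolynomial.eval₂_eq]
    have hterm : ∀ β ∈ Gh.support,
        f (qa ((RingHom.id (MvPolynomial (Fin (r + 1)) K)) (MvPolynomial.coeff β Gh) *
          ∏ i ∈ β.support, (MvPolynomial.C (lam i) : MvPolynomial (Fin (r + 1)) K) ^ β i))
        = f (qa (MvPolynomial.coeff β Gh)) * (∏ i ∈ β.support, lam i ^ β i) := by
      intro β _
      have hprod : (∏ i ∈ β.support, (MvPolynomial.C (lam i) : MvPolynomial (Fin (r + 1)) K) ^ β i)
          = MvPolynomial.C (∏ i ∈ β.support, lam i ^ β i) := by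
        simp only [← map_pow, ← map_prod]
      rw [RingHom.id_apply, hprod, ← MvPolynomial.algebraMap_eq, map_mul, AlgHom.commutes,
        mul_comm (qa (MvPolynomial.coeff β Gh)), ← Algebra.smul_def, map_smul, smul_eq_mul,
        mul_comm]
    rw [map_sum, map_sum, Finset.sum_congr rfl hterm, hh0def, map_sum]
    refine Finset.sum_congr rfl fun β _ => ?_
    rw [MvPolynomial.eval_monomial]
    simp [Finsupp.prod]
  have hGl : ev Gt ∉ I := by
    intro hmem
    have hq0 : qa (ev Gt) = 0 := by
      simpa [hqa, Ideal.Quotient.mkₐ_eq_mk, Ideal.Quotient.eq_zero_iff_mem] using hmem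
    rw [hq0, map_zero] at hcalc
    exact hh00 hcalc.symm
  exact ⟨ev Gt, hGl, hFlGt⟩
end

section
/- Let K be a field and F_1,...,F_s ∈ K[X_1,...,X_r] polynomials with homogenizations F_1^h,...,F_s^h ∈ K[X_0,...,X_r]. If F ∈ K[X_1,...,X_r] belongs to the radical of the ideal (F_1,...,F_s), then X_0 · F^h belongs to the radical of the ideal (F_1^h,...,F_s^h). Consequently, if the ideal (F_1^h,...,F_s^h) is radical, then F^h lies in it after specializing X_0 ↦ 1, so F ∈ (F_1,...,F_s); that is, if (F_1^h,...,F_s^h) is radical then (F_1,...,F_s) is radical. -/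
open MvPolynomial

/-- The affine zero set in `ι → K` of a set of multivariate polynomials. -/
def aZeros {K : Type*} [Field K] {ι : Type*} (S : Set (MvPolynomial ι K)) : Set (ι → K) :=
  {x | ∀ f ∈ S, MvPolynomial.eval x f = 0}

/-- A subset of affine space is algebraic (Zariski closed) if it is a zero set. -/
def IsAlg {K : Type*} [Field K] {ι : Type*} (V : Set (ι → K)) : Prop :=
  ∃ S : Set (MvPolynomial ι K), V = aZeros S

/-- Irreducibility of a subset of affine space with respect to algebraic covers. -/
def IsIrr {K : Type*} [Field K] {ι : Type*} (V : Set (ι → K)) : Prop :=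
  V.Nonempty ∧ ∀ V₁ V₂ : Set (ι → K), IsAlg V₁ → IsAlg V₂ → V ⊆ V₁ ∪ V₂ → V ⊆ V₁ ∨ V ⊆ V₂

/-- Dimension: the supremum of lengths of strictly increasing chains of irreducible
algebraic subsets contained in `V`. -/
noncomputable def aDim {K : Type*} [Field K] {ι : Type*} (V : Set (ι → K)) : ℕ∞ :=
  ⨆ (n : ℕ) (_ : ∃ C : Fin (n + 1) → Set (ι → K),
      StrictMono C ∧ ∀ i, IsAlg (C i) ∧ IsIrr (C i) ∧ C i ⊆ V), (n : ℕ∞)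

/-- `C` is an irreducible component of `V`: a maximal irreducible algebraic subset. -/
def IsComponent {K : Type*} [Field K] {ι : Type*} (V C : Set (ι → K)) : Prop :=
  IsAlg C ∧ IsIrr C ∧ C ⊆ V ∧
    ∀ C' : Set (ι → K), IsAlg C' → IsIrr C' → C' ⊆ V → C ⊆ C' → C' = C

/-- `V` is nonempty of pure dimension `n`. -/
def PureDim {K : Type*} [Field K] {ι : Type*} (V : Set (ι → K)) (n : ℕ) : Prop :=
  V.Nonempty ∧ ∀ C, IsComponent V C → aDim C = (n : ℕ∞)

/-- Homogenization of `F ∈ K[X_1,…,X_r]` with homogenizing variable `X_0`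
(index `0` of `Fin (r+1)`; variable `i` of `Fin r` becomes index `i.succ`). -/
noncomputable def homog {K : Type*} [Field K] {r : ℕ} (F : MvPolynomial (Fin r) K) :
    MvPolynomial (Fin (r + 1)) K :=
  ∑ m ∈ F.support,
    MvPolynomial.monomial
      (Finsupp.mapDomain Fin.succ m + Finsupp.single 0 (F.totalDegree - m.sum fun _ e => e))
      (MvPolynomial.coeff m F)

/-! Homogenizing at a degree `d ≥ deg P`, i.e. `P ↦ X₀ ^ (d - deg P) * Pʰ`, is additive at a
common degree, and multiplicative with degrees adding since a homogeneous polynomial is recovered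
from its dehomogenization `X₀ ↦ 1`. So if `P = ∑ Aᵢ Fᵢ`, some `X₀ ^ N * Pʰ` lies in
`(Fᵢʰ)`; applied to `P = Gⁿ` this puts a power of `X₀ * Gʰ` into `(Fᵢʰ)`. If `(Fᵢʰ)` is radical
it then contains `X₀ * Gʰ`, and dehomogenizing maps `(Fᵢʰ)` onto `(Fᵢ)` and `X₀ * Gʰ` to `G`. -/

namespace Finsupp

variable {M : Type*} {n : ℕ}

lemma cons_add_cons [AddZeroClass M] (a b : M) (s t : Fin n →₀ M) :
    cons a s + cons b t = cons (a + b) (s + t) := by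
  ext i
  refine Fin.cases ?_ (fun j => ?_) i <;> simp [cons_zero, cons_succ]

lemma degree_cons [AddCommMonoid M] (a : M) (s : Fin n →₀ M) :
    (cons a s).degree = a + s.degree :=
  sum_cons n s a

lemma mapDomain_succ_add_single_zero [AddCommMonoid M] (s : Fin n →₀ M) (a : M) :
    s.mapDomain Fin.succ + single 0 a = cons a s := by
  ext i
  refine Fin.cases ?_ (fun j => ?_) i
  · simp [mapDomain_of_notMem_range, cons_zero]
  · simp [mapDomain_apply (Fin.succ_injective n), cons_succ]

end Finsupp

section Homogenization

variable {R : Type*} [CommSemiring R] {r : ℕ}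

-- Meaningful for `P.totalDegree ≤ d`; otherwise `d - m.degree` truncates.
noncomputable def homogOfDegree (d : ℕ) :
    MvPolynomial (Fin r) R →ₗ[R] MvPolynomial (Fin (r + 1)) R :=
  AddMonoidAlgebra.mapDomainLinearMap R R fun m => Finsupp.cons (d - m.degree) m

noncomputable def dehomog : MvPolynomial (Fin (r + 1)) R →ₐ[R] MvPolynomial (Fin r) R :=
  aeval (Fin.cons 1 X)

lemma homogOfDegree_monomial (d : ℕ) (m : Fin r →₀ ℕ) (c : R) :
    homogOfDegree d (monomial m c) = monomial (Finsupp.cons (d - m.degree) m) c := by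
  rw [← single_eq_monomial, ← single_eq_monomial]
  exact AddMonoidAlgebra.mapDomainLinearMap_single _ _ _

lemma homogOfDegree_apply (d : ℕ) (P : MvPolynomial (Fin r) R) :
    homogOfDegree d P = ∑ m ∈ P.support, monomial (Finsupp.cons (d - m.degree) m) (coeff m P) := by
  conv_lhs => rw [← support_sum_monomial_coeff P]
  simp only [map_sum, homogOfDegree_monomial]

lemma dehomog_monomial (n : Fin (r + 1) →₀ ℕ) (c : R) :
    dehomog (monomial n c) = monomial n.tail c := by
  simp [dehomog, monomial_eq, Finsupp.prod_fintype, Fin.prod_univ_succ, Finsupp.tail_apply]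

lemma dehomog_homogOfDegree (d : ℕ) (P : MvPolynomial (Fin r) R) :
    dehomog (homogOfDegree d P) = P := by
  rw [homogOfDegree_apply, map_sum]
  simp only [dehomog_monomial, Finsupp.tail_cons]
  exact support_sum_monomial_coeff P

lemma homogOfDegree_dehomog {d : ℕ} {H : MvPolynomial (Fin (r + 1)) R} (hH : H.IsHomogeneous d) :
    homogOfDegree d (dehomog H) = H := by
  conv_rhs => rw [← support_sum_monomial_coeff H]
  conv_lhs => rw [← support_sum_monomial_coeff H]
  rw [map_sum, map_sum]
  refine Finset.sum_congr rfl fun n hn => ?_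
  have hd : n.degree = d := by
    rw [Finsupp.degree_eq_weight_one]
    exact hH (mem_support_iff.mp hn)
  rw [dehomog_monomial, homogOfDegree_monomial, ← hd, ← Finsupp.cons_tail n,
    Finsupp.degree_cons, Finsupp.tail_cons, Nat.add_sub_cancel]

lemma isHomogeneous_homogOfDegree {d : ℕ} {P : MvPolynomial (Fin r) R} (hP : P.totalDegree ≤ d) :
    (homogOfDegree d P).IsHomogeneous d := by
  rw [homogOfDegree_apply]
  refine IsHomogeneous.sum _ _ _ fun m hm => isHomogeneous_monomial _ ?_
  rw [Finsupp.degree_cons]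
  exact Nat.sub_add_cancel ((le_totalDegree hm).trans hP)

lemma X_zero_pow_mul_homogOfDegree {d : ℕ} (e : ℕ) {P : MvPolynomial (Fin r) R}
    (hP : P.totalDegree ≤ d) :
    X 0 ^ e * homogOfDegree d P = homogOfDegree (d + e) P := by
  rw [homogOfDegree_apply, homogOfDegree_apply, Finset.mul_sum]
  refine Finset.sum_congr rfl fun m hm => ?_
  have hmd : m.degree ≤ d := (le_totalDegree hm).trans hP
  rw [X_pow_eq_monomial, monomial_mul, one_mul, ← Finsupp.cons_zero_eq_single_zero,
    Finsupp.cons_add_cons, zero_add, show e + (d - m.degree) = d + e - m.degree by omega]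

lemma homogOfDegree_mul {d e : ℕ} {P Q : MvPolynomial (Fin r) R} (hP : P.totalDegree ≤ d)
    (hQ : Q.totalDegree ≤ e) :
    homogOfDegree (d + e) (P * Q) = homogOfDegree d P * homogOfDegree e Q := by
  have hPQ := (isHomogeneous_homogOfDegree hP).mul (isHomogeneous_homogOfDegree hQ)
  conv_rhs => rw [← homogOfDegree_dehomog hPQ]
  rw [map_mul dehomog, dehomog_homogOfDegree, dehomog_homogOfDegree]

lemma homogOfDegree_pow {d : ℕ} {P : MvPolynomial (Fin r) R} (hP : P.totalDegree ≤ d) (n : ℕ) :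
    homogOfDegree (d * n) (P ^ n) = homogOfDegree d P ^ n := by
  have hPn := (isHomogeneous_homogOfDegree hP).pow n
  conv_rhs => rw [← homogOfDegree_dehomog hPn]
  rw [map_pow dehomog, dehomog_homogOfDegree]

end Homogenization

section Homog

variable {K : Type*} [Field K] {r : ℕ}

lemma homog_eq_homogOfDegree (P : MvPolynomial (Fin r) K) :
    homog P = homogOfDegree P.totalDegree P := by
  simp only [homog, Finsupp.mapDomain_succ_add_single_zero, homogOfDegree_apply]
  rfl

lemma homogOfDegree_eq_X_zero_pow_mul_homog {d : ℕ} {P : MvPolynomial (Fin r) K}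
    (hP : P.totalDegree ≤ d) :
    homogOfDegree d P = X 0 ^ (d - P.totalDegree) * homog P := by
  rw [homog_eq_homogOfDegree, X_zero_pow_mul_homogOfDegree _ le_rfl, Nat.add_sub_cancel' hP]

lemma dehomog_homog (P : MvPolynomial (Fin r) K) : dehomog (homog P) = P := by
  rw [homog_eq_homogOfDegree, dehomog_homogOfDegree]

lemma homog_mul_homog (P Q : MvPolynomial (Fin r) K) :
    ∃ k, homog P * homog Q = X 0 ^ k * homog (P * Q) := by
  rw [homog_eq_homogOfDegree P, homog_eq_homogOfDegree Q, ← homogOfDegree_mul le_rfl le_rfl,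
    homogOfDegree_eq_X_zero_pow_mul_homog (totalDegree_mul P Q)]
  exact ⟨_, rfl⟩

lemma homog_pow (P : MvPolynomial (Fin r) K) (n : ℕ) :
    ∃ k, homog P ^ n = X 0 ^ k * homog (P ^ n) := by
  rw [homog_eq_homogOfDegree P, ← homogOfDegree_pow le_rfl,
    homogOfDegree_eq_X_zero_pow_mul_homog ((totalDegree_pow P n).trans_eq (mul_comm _ _))]
  exact ⟨_, rfl⟩

lemma exists_X_zero_pow_mul_homog_mem_span {S : Set (MvPolynomial (Fin r) K)}
    {P : MvPolynomial (Fin r) K} (hP : P ∈ Ideal.span S) :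
    ∃ N, X 0 ^ N * homog P ∈ Ideal.span (homog '' S) := by
  induction hP using Submodule.span_induction with
  | mem P hP => exact ⟨0, by simpa using Ideal.subset_span (Set.mem_image_of_mem homog hP)⟩
  | zero => exact ⟨0, by simp [homog]⟩
  | add P Q _ _ hP hQ =>
    obtain ⟨N, hN⟩ := hP
    obtain ⟨M, hM⟩ := hQ
    set D := max P.totalDegree Q.totalDegree
    have hsum : X 0 ^ (D - (P + Q).totalDegree) * homog (P + Q) =
        X 0 ^ (D - P.totalDegree) * homog P + X 0 ^ (D - Q.totalDegree) * homog Q := by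
      rw [← homogOfDegree_eq_X_zero_pow_mul_homog (totalDegree_add P Q),
        ← homogOfDegree_eq_X_zero_pow_mul_homog (le_max_left _ _),
        ← homogOfDegree_eq_X_zero_pow_mul_homog (le_max_right _ _), map_add]
    refine ⟨N + M + (D - (P + Q).totalDegree), ?_⟩
    rw [pow_add, mul_assoc, hsum]
    convert Ideal.add_mem _ (Ideal.mul_mem_left _ (X 0 ^ (M + (D - P.totalDegree))) hN)
      (Ideal.mul_mem_left _ (X 0 ^ (N + (D - Q.totalDegree))) hM) using 1
    ring
  | smul A P _ hP =>
    obtain ⟨N, hN⟩ := hP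
    obtain ⟨k, hk⟩ := homog_mul_homog A P
    refine ⟨N + k, ?_⟩
    convert Ideal.mul_mem_left _ (homog A) hN using 1
    rw [smul_eq_mul]
    linear_combination (X 0 : MvPolynomial (Fin (r + 1)) K) ^ N * hk.symm

lemma X_zero_mul_homog_mem_radical_span {S : Set (MvPolynomial (Fin r) K)}
    {G : MvPolynomial (Fin r) K} (hG : G ∈ (Ideal.span S).radical) :
    X 0 * homog G ∈ (Ideal.span (homog '' S)).radical := by
  obtain ⟨n, hn⟩ := hG
  obtain ⟨N, hN⟩ := exists_X_zero_pow_mul_homog_mem_span hn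
  obtain ⟨k, hk⟩ := homog_pow G n
  refine ⟨N + n, ?_⟩
  convert Ideal.mul_mem_left _ (X 0 ^ (n + k) * homog G ^ N) hN using 1
  rw [mul_pow, pow_add (homog G), hk]
  ring

lemma map_dehomog_span_homog (S : Set (MvPolynomial (Fin r) K)) :
    (Ideal.span (homog '' S)).map dehomog = Ideal.span S := by
  rw [Ideal.map_span, Set.image_image]
  simp only [dehomog_homog, Set.image_id']

lemma dehomog_X_zero_mul_homog (G : MvPolynomial (Fin r) K) : dehomog (X 0 * homog G) = G := by
  rw [map_mul, dehomog_homog, dehomog, aeval_X, Fin.cons_zero, one_mul]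

end Homog

/-- If `F` lies in the radical of `(F_1,…,F_s)` then `X_0 · F^h` lies in
the radical of `(F_1^h,…,F_s^h)`; consequently if `(F_1^h,…,F_s^h)` is radical then so is
`(F_1,…,F_s)`. -/
theorem stmt6 {K : Type*} [Field K] (r s : ℕ) (F : Fin s → MvPolynomial (Fin r) K) :
    (∀ G : MvPolynomial (Fin r) K, G ∈ (Ideal.span (Set.range F)).radical →
      MvPolynomial.X 0 * homog G ∈
        (Ideal.span (Set.range fun i => homog (F i))).radical) ∧
    ((Ideal.span (Set.range fun i => homog (F i))).IsRadical →
      (Ideal.span (Set.range F)).IsRadical) := by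
  rw [Set.range_comp' homog F]
  refine ⟨fun G hG => X_zero_mul_homog_mem_radical_span hG, fun hJ G hG => ?_⟩
  have hmem := Ideal.mem_map_of_mem dehomog (hJ (X_zero_mul_homog_mem_radical_span hG))
  rwa [dehomog_X_zero_mul_homog, map_dehomog_span_homog] at hmem
end

section
/- Let K be a field, s < r, and F_1,...,F_s ∈ K[X_1,...,X_r]. Suppose the projective variety V(F_1^h,...,F_s^h) ⊂ P^r(K̄) defined by the homogenizations is irreducible of dimension r-s and that the affine variety V(F_1,...,F_s) ⊂ A^r(K̄) has pure dimension r-s. Then V(F_1^h,...,F_s^h) is the projective closure of V(F_1,...,F_s), and V(F_1,...,F_s) is irreducible. -/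
/-!
Evaluating a homogenization at `t • (1, x)` gives `homog f (t • (1, x)) = t ^ deg f * f x`, so
off the hyperplane `X 0 = 0` the zero set `Z` of the homogenizations is exactly the cone over
`W = V(F)`. As `W` is nonempty, the irreducible `Z` is not contained in that hyperplane, hence it
lies in every algebraic set containing the cone: so `Z` is the closure of the cone, and a cover of
`W` by two algebraic sets, homogenized, gives a cover of `Z` that irreducibility forces into one
piece.
-/

open MvPolynomial

/-- Zariski closure of a subset of affine space. -/
def zcl {K : Type*} [Field K] {ι : Type*} (S : Set (ι → K)) : Set (ι → K) :=
  aZeros {f : MvPolynomial ι K | ∀ x ∈ S, MvPolynomial.eval x f = 0}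

section Homogenization

variable {L : Type*} [Field L] {r : ℕ}

lemma eval_smul_cons_monomial_mapDomain_succ (t : L) (x : Fin r → L) (d : Fin r →₀ ℕ) (k : ℕ)
    (c : L) :
    eval (t • Fin.cons 1 x : Fin (r + 1) → L)
        (monomial (Finsupp.mapDomain Fin.succ d + Finsupp.single 0 k) c) =
      t ^ (k + d.degree) * eval x (monomial d c) := by
  set e : Fin (r + 1) →₀ ℕ := Finsupp.mapDomain Fin.succ d + Finsupp.single 0 k
  have he0 : e 0 = k := by simp [e, Finsupp.mapDomain_of_notMem_range]
  have hesucc : ∀ j : Fin r, e j.succ = d j := fun j => by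
    simp [e, Finsupp.mapDomain_apply (Fin.succ_injective r)]
  rw [eval_monomial, eval_monomial, Finsupp.prod_fintype _ _ fun _ => pow_zero _,
    Finsupp.prod_fintype _ _ fun _ => pow_zero _, Fin.prod_univ_succ]
  simp only [he0, hesucc, Pi.smul_apply, Fin.cons_zero, Fin.cons_succ, smul_eq_mul, mul_pow,
    Finset.prod_mul_distrib, Finset.prod_pow_eq_pow_sum, Finsupp.degree_eq_sum]
  ring

lemma eval_homog_smul_cons (f : MvPolynomial (Fin r) L) (t : L) (x : Fin r → L) :
    eval (t • Fin.cons 1 x : Fin (r + 1) → L) (homog f) = t ^ f.totalDegree * eval x f := by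
  rw [homog, map_sum, eval_eq', Finset.mul_sum]
  refine Finset.sum_congr rfl fun d hd => ?_
  have hdeg : d.degree ≤ f.totalDegree := le_totalDegree hd
  rw [eval_smul_cons_monomial_mapDomain_succ, eval_monomial,
    Finsupp.prod_fintype _ _ fun _ => pow_zero _,
    show (d.sum fun _ e => e) = d.degree from rfl, Nat.sub_add_cancel hdeg]

lemma map_homog {M : Type*} [Field M] (φ : L →+* M) (f : MvPolynomial (Fin r) L) :
    map φ (homog f) = homog (map φ f) := by
  have hsupp : (map φ f).support = f.support := support_map_of_injective _ φ.injective
  have hdeg : (map φ f).totalDegree = f.totalDegree := by rw [totalDegree, totalDegree, hsupp]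
  rw [homog, homog, map_sum, hsupp, hdeg]
  exact Finset.sum_congr rfl fun d _ => by rw [map_monomial, coeff_map]

end Homogenization

section ZariskiTopology

variable {L : Type*} [Field L] {ι : Type*}

lemma aZeros_union_eq_aZeros_image2_mul (S T : Set (MvPolynomial ι L)) :
    aZeros S ∪ aZeros T = aZeros (Set.image2 (· * ·) S T) := by
  ext x
  simp only [aZeros, Set.mem_union, Set.mem_ofPred_eq, Set.forall_mem_image2, map_mul,
    mul_eq_zero]
  constructor
  · rintro (hS | hT) f hf g hg
    exacts [Or.inl (hS f hf), Or.inr (hT g hg)]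
  · intro h
    by_contra! hx
    obtain ⟨⟨f, hf, hfx⟩, ⟨g, hg, hgx⟩⟩ := hx
    exact (h f hf g hg).elim hfx hgx

lemma IsAlg.union {V₁ V₂ : Set (ι → L)} (h₁ : IsAlg V₁) (h₂ : IsAlg V₂) : IsAlg (V₁ ∪ V₂) := by
  obtain ⟨S, rfl⟩ := h₁
  obtain ⟨T, rfl⟩ := h₂
  exact ⟨_, aZeros_union_eq_aZeros_image2_mul S T⟩

lemma subset_zcl (V : Set (ι → L)) : V ⊆ zcl V :=
  fun _ hx _ hf => hf _ hx

lemma zcl_subset_aZeros {V : Set (ι → L)} {S : Set (MvPolynomial ι L)} (h : V ⊆ aZeros S) :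
    zcl V ⊆ aZeros S :=
  fun _ hx f hf => hx f fun _ hy => h hy f hf

lemma IsIrr.subset_of_subset_union {V A B : Set (ι → L)} (hV : IsIrr V) (hA : IsAlg A)
    (hB : IsAlg B) (h : V ⊆ A ∪ B) (hVA : ¬V ⊆ A) : V ⊆ B :=
  (hV.2 A B hA hB h).resolve_left hVA

end ZariskiTopology

section Cone

variable {L : Type*} [Field L] {r : ℕ}

/-- The affine cone in `L^{r+1}` over the image of `W` under `x ↦ (1, x)`: its Zariski closure
is the cone over the projective closure of `W`. -/
def coneOver (W : Set (Fin r → L)) : Set (Fin (r + 1) → L) :=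
  {y | ∃ t : L, ∃ x ∈ W, y = t • (Fin.cons 1 x : Fin (r + 1) → L)}

variable {S : Set (MvPolynomial (Fin r) L)}

lemma smul_cons_mem_aZeros_homog (t : L) {x : Fin r → L} (hx : x ∈ aZeros S) :
    (t • Fin.cons 1 x : Fin (r + 1) → L) ∈ aZeros (homog '' S) := by
  rintro _ ⟨f, hf, rfl⟩
  rw [eval_homog_smul_cons, hx f hf, mul_zero]

lemma smul_cons_mem_aZeros_homog_iff {t : L} (ht : t ≠ 0) {x : Fin r → L} :
    (t • Fin.cons 1 x : Fin (r + 1) → L) ∈ aZeros (homog '' S) ↔ x ∈ aZeros S := by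
  refine ⟨fun h f hf => ?_, smul_cons_mem_aZeros_homog t⟩
  have := h _ ⟨f, hf, rfl⟩
  rwa [eval_homog_smul_cons, mul_eq_zero, or_iff_right (pow_ne_zero _ ht)] at this

lemma cons_one_mem_aZeros_homog_iff {x : Fin r → L} :
    (Fin.cons 1 x : Fin (r + 1) → L) ∈ aZeros (homog '' S) ↔ x ∈ aZeros S := by
  simpa only [one_smul] using smul_cons_mem_aZeros_homog_iff (S := S) (one_ne_zero' L) (x := x)

lemma coneOver_aZeros_subset : coneOver (aZeros S) ⊆ aZeros (homog '' S) := by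
  rintro _ ⟨t, x, hx, rfl⟩
  exact smul_cons_mem_aZeros_homog t hx

lemma eq_smul_cons_div {z : Fin (r + 1) → L} (hz : z 0 ≠ 0) :
    z = z 0 • (Fin.cons 1 fun j => z j.succ / z 0 : Fin (r + 1) → L) := by
  ext i
  cases i using Fin.cases <;> simp [mul_div_cancel₀ _ hz]

lemma aZeros_homog_subset_aZeros_X_zero_union_coneOver :
    aZeros (homog '' S) ⊆ aZeros {X 0} ∪ coneOver (aZeros S) := by
  intro z hz
  by_cases hz0 : z 0 = 0
  · left
    rintro _ rfl
    rwa [eval_X]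
  · right
    rw [eq_smul_cons_div hz0] at hz ⊢
    exact ⟨z 0, _, (smul_cons_mem_aZeros_homog_iff hz0).1 hz, rfl⟩

lemma cons_one_notMem_aZeros_X_zero (x : Fin r → L) :
    (Fin.cons 1 x : Fin (r + 1) → L) ∉ aZeros {X 0} :=
  fun h => one_ne_zero' L (by simpa using h (X 0) rfl)

lemma IsIrr.aZeros_homog_subset (hirr : IsIrr (aZeros (homog '' S))) (hW : (aZeros S).Nonempty)
    {B : Set (Fin (r + 1) → L)} (hB : IsAlg B) (hcone : coneOver (aZeros S) ⊆ B) :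
    aZeros (homog '' S) ⊆ B := by
  obtain ⟨x, hx⟩ := hW
  refine hirr.subset_of_subset_union (A := aZeros {X 0}) ⟨_, rfl⟩ hB ?_ fun h => ?_
  · exact aZeros_homog_subset_aZeros_X_zero_union_coneOver.trans
      (Set.union_subset_union_right _ hcone)
  · exact cons_one_notMem_aZeros_X_zero x (h (cons_one_mem_aZeros_homog_iff.2 hx))

lemma IsIrr.aZeros_homog_eq_zcl (hirr : IsIrr (aZeros (homog '' S))) (hW : (aZeros S).Nonempty) :
    aZeros (homog '' S) = zcl (coneOver (aZeros S)) :=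
  (hirr.aZeros_homog_subset hW ⟨_, rfl⟩ (subset_zcl _)).antisymm
    (zcl_subset_aZeros coneOver_aZeros_subset)

lemma IsIrr.of_aZeros_homog (hirr : IsIrr (aZeros (homog '' S))) (hW : (aZeros S).Nonempty) :
    IsIrr (aZeros S) := by
  refine ⟨hW, ?_⟩
  rintro _ _ ⟨S₁, rfl⟩ ⟨S₂, rfl⟩ hsub
  have hcone : coneOver (aZeros S) ⊆ aZeros (homog '' S₁) ∪ aZeros (homog '' S₂) := by
    rintro _ ⟨t, x, hx, rfl⟩
    exact (hsub hx).imp (smul_cons_mem_aZeros_homog t) (smul_cons_mem_aZeros_homog t)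
  have hZ := hirr.aZeros_homog_subset hW (IsAlg.union ⟨_, rfl⟩ ⟨_, rfl⟩) hcone
  refine (hirr.2 _ _ ⟨_, rfl⟩ ⟨_, rfl⟩ hZ).imp ?_ ?_ <;>
  · intro h x hx
    exact cons_one_mem_aZeros_homog_iff.1 (h (cons_one_mem_aZeros_homog_iff.2 hx))

end Cone

theorem stmt8_general {K : Type*} [Field K] (r s : ℕ)
    (F : Fin s → MvPolynomial (Fin r) K)
    (hirr : IsIrr (aZeros (Set.range fun i =>
        MvPolynomial.map (algebraMap K (AlgebraicClosure K)) (homog (F i)))))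
    (hpure : PureDim (aZeros (Set.range fun i =>
        MvPolynomial.map (algebraMap K (AlgebraicClosure K)) (F i))) (r - s)) :
    aZeros (Set.range fun i =>
        MvPolynomial.map (algebraMap K (AlgebraicClosure K)) (homog (F i))) =
      zcl {y : Fin (r + 1) → AlgebraicClosure K |
        ∃ t : AlgebraicClosure K,
          ∃ x ∈ aZeros (Set.range fun i =>
            MvPolynomial.map (algebraMap K (AlgebraicClosure K)) (F i)),
            y = t • (Fin.cons (1 : AlgebraicClosure K) x : Fin (r + 1) → AlgebraicClosure K)} ∧
    IsIrr (aZeros (Set.range fun i =>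
        MvPolynomial.map (algebraMap K (AlgebraicClosure K)) (F i))) := by
  have hrange : (Set.range fun i => map (algebraMap K (AlgebraicClosure K)) (homog (F i))) =
      homog '' Set.range fun i => map (algebraMap K (AlgebraicClosure K)) (F i) := by
    simp only [map_homog, ← Set.range_comp, Function.comp_def]
  rw [hrange] at hirr ⊢
  exact ⟨hirr.aZeros_homog_eq_zcl hpure.1, hirr.of_aZeros_homog hpure.1⟩

/-- Let `s < r` and suppose `V(F_1^h,…,F_s^h) ⊆ P^r(K̄)` is irreducible of
dimension `r - s` (cone irreducible of dimension `r - s + 1`) and `V(F_1,…,F_s) ⊆ A^r(K̄)`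
has pure dimension `r - s`. Then `V(F_1^h,…,F_s^h)` is the projective closure of
`V(F_1,…,F_s)` (the cone equals the Zariski closure of the cone over the embedded affine
points `t • (1, x)`), and `V(F_1,…,F_s)` is irreducible. -/
theorem stmt8 {K : Type*} [Field K] (r s : ℕ) (hrs : s < r)
    (F : Fin s → MvPolynomial (Fin r) K)
    (hirr : IsIrr (aZeros (Set.range fun i =>
        MvPolynomial.map (algebraMap K (AlgebraicClosure K)) (homog (F i)))))
    (hdimh : aDim (aZeros (Set.range fun i =>
        MvPolynomial.map (algebraMap K (AlgebraicClosure K)) (homog (F i)))) =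
      ((r - s + 1 : ℕ) : ℕ∞))
    (hpure : PureDim (aZeros (Set.range fun i =>
        MvPolynomial.map (algebraMap K (AlgebraicClosure K)) (F i))) (r - s)) :
    aZeros (Set.range fun i =>
        MvPolynomial.map (algebraMap K (AlgebraicClosure K)) (homog (F i))) =
      zcl {y : Fin (r + 1) → AlgebraicClosure K |
        ∃ t : AlgebraicClosure K,
          ∃ x ∈ aZeros (Set.range fun i =>
            MvPolynomial.map (algebraMap K (AlgebraicClosure K)) (F i)),
            y = t • (Fin.cons (1 : AlgebraicClosure K) x : Fin (r + 1) → AlgebraicClosure K)} ∧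
    IsIrr (aZeros (Set.range fun i =>
        MvPolynomial.map (algebraMap K (AlgebraicClosure K)) (F i))) :=
  stmt8_general r s F hirr hpure
end
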